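/- arXiv:math/0612052 — 2 statements merged into one kernel-verified Lean document; each statement's English description precedes it below -/
import Mathlib

section
/- For every real λ > 0 and integers n, m, l with 1 ≤ l < m ≤ n, one has (C(n−m+l, l)/C(n, l)) · s_{n−l}(λ) · s_{n−m+l}(λ) < s_n(λ) · s_{n−m}(λ), where C(a, b) denotes the binomial coefficient. -/
/-!
Put `u_k := k! · s_k(λ)`. Clearing the binomial coefficients, the inequality becomes
`u_{n-l} · u_{n-m+l} < u_n · u_{n-m}`, i.e. `u_{b+l} / u_b < u_{c+l} / u_c` for
`b = n-m < c = n-l`, which follows by telescoping once the ratios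
`u_{k+1} / u_k = (k+1) s_{k+1} / s_k` are known to be strictly increasing in `k`. For that, the
cross difference `F(n, j) = (n+1) s_{n+1} s_j - (j+1) s_n s_{j+1}` (`sCross n j`) satisfies
`F(n, j)(0) = n - j` and `F(n, j)' = F(n, j-1) + F(n-1, j)` (the first term absent for `j = 0`),
so a double induction shows `F(n, j) ≥ n - j` on `[0, ∞)`.
-/

/-- The `n`-th partial sum of the Taylor series of the exponential function. -/
noncomputable def s (n : ℕ) (a : ℝ) : ℝ :=
  ∑ j ∈ Finset.range (n + 1), a ^ j / (Nat.factorial j : ℝ)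

open Finset Nat

lemma s_pos {a : ℝ} (ha : 0 ≤ a) (n : ℕ) : 0 < s n a :=
  sum_pos' (fun _ _ => by positivity) ⟨0, mem_range.2 n.succ_pos, by simp⟩

@[simp]
lemma s_apply_zero (n : ℕ) : s n 0 = 1 := by
  simp [s, zero_pow_eq, ite_div]

lemma hasDerivAt_s_succ (n : ℕ) (x : ℝ) : HasDerivAt (s (n + 1)) (s n x) x := by
  have hterm (j : ℕ) :
      HasDerivAt (fun a : ℝ => a ^ (j + 1) / ((j + 1)! : ℝ)) (x ^ j / (j ! : ℝ)) x := by
    refine ((hasDerivAt_pow (j + 1) x).div_const _).congr_deriv ?_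
    rw [factorial_succ]
    push_cast
    field_simp
  have hs : s (n + 1) = fun a => 1 + ∑ j ∈ range (n + 1), a ^ (j + 1) / ((j + 1)! : ℝ) := by
    ext a
    rw [s, sum_range_succ', add_comm]
    simp
  rw [hs]
  exact (HasDerivAt.fun_sum fun j _ => hterm j).const_add 1

lemma le_of_hasDerivAt_nonneg {f f' : ℝ → ℝ} (hf : ∀ x, HasDerivAt f (f' x) x)
    (hf' : ∀ x, 0 ≤ x → 0 ≤ f' x) {a : ℝ} (ha : 0 ≤ a) : f 0 ≤ f a := by
  refine monotoneOn_of_hasDerivWithinAt_nonneg (convex_Ici 0)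
    (fun x _ => (hf x).continuousAt.continuousWithinAt) (fun x _ => (hf x).hasDerivWithinAt)
    (fun x hx => hf' x ?_) Set.self_mem_Ici ha ha
  rw [interior_Ici] at hx
  exact le_of_lt hx

noncomputable def sCross (n j : ℕ) (a : ℝ) : ℝ :=
  (n + 1) * s (n + 1) a * s j a - (j + 1) * s n a * s (j + 1) a

lemma sCross_self (n : ℕ) (a : ℝ) : sCross n n a = 0 := by
  rw [sCross]
  ring

lemma sCross_apply_zero (n j : ℕ) : sCross n j 0 = n - j := by
  simp [sCross]

lemma hasDerivAt_sCross_succ_zero (n : ℕ) (x : ℝ) :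
    HasDerivAt (sCross (n + 1) 0) (sCross n 0 x) x := by
  have h := (((hasDerivAt_s_succ (n + 1) x).const_mul (((n + 1 : ℕ) : ℝ) + 1)).fun_mul
    (hasDerivAt_const x (s 0 x))).fun_sub
    (((hasDerivAt_s_succ n x).const_mul (((0 : ℕ) : ℝ) + 1)).fun_mul (hasDerivAt_s_succ 0 x))
  refine h.congr_deriv ?_
  simp [sCross]
  ring

lemma hasDerivAt_sCross_succ_succ (n j : ℕ) (x : ℝ) :
    HasDerivAt (sCross (n + 1) (j + 1)) (sCross (n + 1) j x + sCross n (j + 1) x) x := by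
  have h := (((hasDerivAt_s_succ (n + 1) x).const_mul (((n + 1 : ℕ) : ℝ) + 1)).fun_mul
    (hasDerivAt_s_succ j x)).fun_sub
    (((hasDerivAt_s_succ n x).const_mul (((j + 1 : ℕ) : ℝ) + 1)).fun_mul
      (hasDerivAt_s_succ (j + 1) x))
  refine h.congr_deriv ?_
  simp [sCross]
  ring

lemma sub_le_sCross {n j : ℕ} (hjn : j ≤ n) {a : ℝ} (ha : 0 ≤ a) :
    (n : ℝ) - j ≤ sCross n j a := by
  induction n generalizing j a with
  | zero =>
    obtain rfl : j = 0 := by omega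
    simp [sCross_self]
  | succ n ihn =>
    induction j generalizing a with
    | zero =>
      have hmono := le_of_hasDerivAt_nonneg (hasDerivAt_sCross_succ_zero n)
        (fun x hx => n.cast_nonneg.trans (by simpa using ihn n.zero_le hx)) ha
      simpa [sCross_apply_zero] using hmono
    | succ j ihj =>
      rcases (show j + 1 = n + 1 ∨ j + 1 ≤ n by omega) with hj | hj
      · simp [hj, sCross_self]
      have hmono := le_of_hasDerivAt_nonneg (hasDerivAt_sCross_succ_succ n j) (fun x hx => by
        have h₁ := ihj (by omega) hx
        have h₂ := ihn hj hx
        have : (j : ℝ) + 1 ≤ n := by exact_mod_cast hj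
        push_cast at h₁ h₂
        linarith) ha
      simpa [sCross_apply_zero] using hmono

lemma succ_mul_s_mul_s_lt {j k : ℕ} (hjk : j < k) {a : ℝ} (ha : 0 ≤ a) :
    (j + 1) * s k a * s (j + 1) a < (k + 1) * s (k + 1) a * s j a := by
  have h := sub_le_sCross hjk.le ha
  have : (j : ℝ) < k := by exact_mod_cast hjk
  rw [sCross] at h
  linarith

lemma div_lt_div_of_strictMono_ratio {v : ℕ → ℝ} (hv : ∀ k, 0 < v k)
    (h : StrictMono fun k => v (k + 1) / v k) {b c l : ℕ} (hbc : b < c) (hl : 1 ≤ l) :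
    v (b + l) / v b < v (c + l) / v c := by
  induction l, hl using Nat.le_induction with
  | base => exact h hbc
  | succ l _ ih =>
    have htelescope (d : ℕ) :
        v (d + (l + 1)) / v d = v (d + l + 1) / v (d + l) * (v (d + l) / v d) := by
      rw [← add_assoc, div_mul_div_cancel₀ (hv _).ne']
    rw [htelescope, htelescope]
    exact mul_lt_mul'' (h (by omega)) ih (div_pos (hv _) (hv _)).le (div_pos (hv _) (hv _)).le

lemma strictMono_factorial_mul_s_ratio {a : ℝ} (ha : 0 ≤ a) :
    StrictMono fun k => ((k + 1)! * s (k + 1) a) / (k ! * s k a) := by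
  have hratio (k : ℕ) :
      ((k + 1)! * s (k + 1) a) / (k ! * s k a) = (k + 1) * s (k + 1) a / s k a := by
    rw [factorial_succ]
    push_cast
    field_simp
  intro j k hjk
  simp only [hratio]
  rw [div_lt_div_iff₀ (s_pos ha j) (s_pos ha k)]
  linarith [succ_mul_s_mul_s_lt hjk ha]

lemma choose_div_choose_mul_s_mul_s_lt {b c l : ℕ} (hbc : b < c) (hl : 1 ≤ l) {a : ℝ}
    (ha : 0 ≤ a) :
    ((b + l).choose l / (c + l).choose l : ℝ) * s c a * s (b + l) a < s (c + l) a * s b a := by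
  have h := div_lt_div_of_strictMono_ratio (v := fun k => k ! * s k a)
    (fun k => mul_pos (by positivity) (s_pos ha k)) (strictMono_factorial_mul_s_ratio ha) hbc hl
  rw [Nat.cast_choose ℝ le_add_self, Nat.cast_choose ℝ le_add_self, Nat.add_sub_cancel,
    Nat.add_sub_cancel]
  have := s_pos ha b
  have := s_pos ha c
  rw [div_lt_div_iff₀ (by positivity) (by positivity)] at h
  field_simp
  linarith

theorem stmt_1 (a : ℝ) (ha : 0 < a) (n m l : ℕ)
    (hl : 1 ≤ l) (hlm : l < m) (hmn : m ≤ n) :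
    ((Nat.choose (n - m + l) l : ℝ) / (Nat.choose n l : ℝ)) * s (n - l) a * s (n - m + l) a
      < s n a * s (n - m) a := by
  have h := choose_div_choose_mul_s_mul_s_lt (b := n - m) (c := n - l) (by omega) hl ha.le
  rwa [Nat.sub_add_cancel (by omega : l ≤ n)] at h
end

section
/- For every real λ > 0 and every integer n ≥ 1, the partial sums of the exponential series satisfy s_{n−1}(λ) · s_{n+1}(λ) > (n/(n+1)) · s_n(λ)². -/
/-!
Write `x j = a ^ j / j !`, `P = s (n - 1) a`, `S = s n a`. Since `(n + 1) x (n + 1) = a x n`,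
the inequality reduces to `x n * ∑_{k < n} (n - k) x k < P * S`. The sequence `x` is log-concave,
so `x k x n ≤ x j x (n - j + k)` for `k ≤ j ≤ n`; summing over `k ≤ j < n` bounds the left side
by `∑_{j < n} x j (x (n - j) + ⋯ + x n) ≤ P (S - x 0) < P S`.
-/

open Finset
open scoped Nat

noncomputable def expTerm (a : ℝ) (j : ℕ) : ℝ := a ^ j / j !

lemma s_eq_sum_expTerm (n : ℕ) (a : ℝ) : s n a = ∑ j ∈ range (n + 1), expTerm a j := rfl

lemma s_succ (n : ℕ) (a : ℝ) : s (n + 1) a = s n a + expTerm a (n + 1) :=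
  sum_range_succ _ _

lemma expTerm_zero (a : ℝ) : expTerm a 0 = 1 := by simp [expTerm]

lemma expTerm_nonneg {a : ℝ} (ha : 0 ≤ a) (j : ℕ) : 0 ≤ expTerm a j := by
  unfold expTerm; positivity

lemma succ_mul_expTerm_succ (a : ℝ) (j : ℕ) :
    ((j : ℝ) + 1) * expTerm a (j + 1) = a * expTerm a j := by
  simp only [expTerm, Nat.factorial_succ, pow_succ, Nat.cast_mul, Nat.cast_succ]
  field_simp

lemma one_le_s {a : ℝ} (ha : 0 ≤ a) (n : ℕ) : 1 ≤ s n a := by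
  rw [s_eq_sum_expTerm, ← expTerm_zero a]
  exact single_le_sum (fun j _ ↦ expTerm_nonneg ha j) (mem_range.mpr n.succ_pos)

lemma factorial_mul_factorial_add_le {k j : ℕ} (hkj : k ≤ j) :
    ∀ d, j ! * (k + d)! ≤ k ! * (j + d)!
  | 0 => (Nat.mul_comm _ _).le
  | d + 1 => by
    rw [← Nat.add_assoc, ← Nat.add_assoc, Nat.factorial_succ, Nat.factorial_succ]
    calc j ! * ((k + d + 1) * (k + d)!) = (j ! * (k + d)!) * (k + d + 1) := by ring
      _ ≤ (k ! * (j + d)!) * (j + d + 1) :=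
        Nat.mul_le_mul (factorial_mul_factorial_add_le hkj d) (by omega)
      _ = k ! * ((j + d + 1) * (j + d)!) := by ring

lemma expTerm_mul_expTerm_le {a : ℝ} (ha : 0 ≤ a) {k j : ℕ} (hkj : k ≤ j) (d : ℕ) :
    expTerm a k * expTerm a (j + d) ≤ expTerm a j * expTerm a (k + d) := by
  have hfac : ((j ! * (k + d)! : ℕ) : ℝ) ≤ (k ! * (j + d)! : ℕ) := by
    exact_mod_cast factorial_mul_factorial_add_le hkj d
  simp only [expTerm, Nat.cast_mul] at hfac ⊢
  rw [div_mul_div_comm, div_mul_div_comm, ← pow_add, ← pow_add,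
    show k + (j + d) = j + (k + d) by omega]
  exact div_le_div_of_nonneg_left (by positivity) (by positivity) hfac

lemma sum_range_tail_le_sum_sub_head {x : ℕ → ℝ} (hx : ∀ i, 0 ≤ x i) {j N : ℕ} (hjN : j < N) :
    ∑ k ∈ range (j + 1), x (N - j + k) ≤ ∑ i ∈ range (N + 1), x i - x 0 := by
  have hsplit := sum_range_add x (N - j) (j + 1)
  rw [show N - j + (j + 1) = N + 1 by omega] at hsplit
  have hhead : x 0 ≤ ∑ i ∈ range (N - j), x i :=
    single_le_sum (fun i _ ↦ hx i) (mem_range.mpr (by omega))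
  linarith

lemma mul_weighted_sum_le_of_logConcave {x : ℕ → ℝ} (hx : ∀ i, 0 ≤ x i)
    (hlc : ∀ k j d, k ≤ j → x k * x (j + d) ≤ x j * x (k + d)) (N : ℕ) :
    x N * ∑ k ∈ range N, ((N : ℝ) - k) * x k ≤
      (∑ j ∈ range N, x j) * (∑ i ∈ range (N + 1), x i - x 0) := by
  calc x N * ∑ k ∈ range N, ((N : ℝ) - k) * x k
      = ∑ k ∈ Ico 0 N, ∑ _j ∈ Ico k N, x k * x N := by
        rw [mul_sum, range_eq_Ico]
        refine sum_congr rfl fun k hk ↦ ?_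
        rw [sum_const, Nat.card_Ico, nsmul_eq_mul, Nat.cast_sub (mem_Ico.mp hk).2.le]
        ring
    _ ≤ ∑ k ∈ Ico 0 N, ∑ j ∈ Ico k N, x j * x (N - j + k) := by
        refine sum_le_sum fun k _ ↦ sum_le_sum fun j hj ↦ ?_
        have hkj := mem_Ico.mp hj
        simpa [show j + (N - j) = N by omega, Nat.add_comm k] using hlc k j (N - j) hkj.1
    _ = ∑ j ∈ range N, x j * ∑ k ∈ range (j + 1), x (N - j + k) := by
        rw [sum_Ico_Ico_comm, range_eq_Ico]
        simp only [mul_sum, range_eq_Ico]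
    _ ≤ ∑ j ∈ range N, x j * (∑ i ∈ range (N + 1), x i - x 0) :=
        sum_le_sum fun j hj ↦
          mul_le_mul_of_nonneg_left (sum_range_tail_le_sum_sub_head hx (mem_range.mp hj)) (hx j)
    _ = _ := (sum_mul ..).symm

lemma succ_mul_s_succ_sub_mul_s (a : ℝ) (n : ℕ) :
    ((n : ℝ) + 1) * s (n + 1) a - a * s n a =
      ∑ k ∈ range (n + 1), ((n : ℝ) + 1 - k) * expTerm a k := by
  induction n with
  | zero => simp [s, expTerm, sum_range_succ]
  | succ n ih =>
    rw [s_succ (n + 1), s_succ n, sum_range_succ]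
    have hstep := succ_mul_expTerm_succ a (n + 1)
    have hsum : ∑ k ∈ range (n + 1), ((n + 1 : ℕ) + 1 - (k : ℝ)) * expTerm a k =
        ∑ k ∈ range (n + 1), ((n : ℝ) + 1 - k) * expTerm a k + s n a := by
      rw [s_eq_sum_expTerm, ← sum_add_distrib]
      exact sum_congr rfl fun k _ ↦ by push_cast; ring
    rw [hsum, ← ih, s_succ]
    push_cast at hstep ⊢
    linear_combination hstep

theorem stmt_9 (a : ℝ) (ha : 0 < a) (n : ℕ) (hn : 1 ≤ n) :
    s (n - 1) a * s (n + 1) a > ((n : ℝ) / (n + 1 : ℝ)) * (s n a) ^ 2 := by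
  obtain ⟨m, rfl⟩ := exists_add_of_le hn
  rw [Nat.add_sub_cancel_left, Nat.add_comm 1 m]
  have hbound := mul_weighted_sum_le_of_logConcave (expTerm_nonneg ha.le)
    (fun _ _ d hkj ↦ expTerm_mul_expTerm_le ha.le hkj d) (m + 1)
  rw [← s_eq_sum_expTerm, ← s_eq_sum_expTerm, expTerm_zero, Nat.cast_succ,
    ← succ_mul_s_succ_sub_mul_s, s_succ m] at hbound
  have hstep := succ_mul_expTerm_succ a (m + 1)
  have hP := one_le_s ha.le m
  rw [s_succ (m + 1), s_succ m, gt_iff_lt, div_mul_eq_mul_div, div_lt_iff₀ (by positivity)]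
  push_cast at hstep ⊢
  linear_combination hbound - s m a * hstep + hP
end
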